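/- arXiv:2111.11095 — 3 statements merged into one kernel-verified Lean document; each statement's English description precedes it below -/
import Mathlib

section
/- Let v : [0,∞) → ℝ be a measurable function with v(t) ≥ v_min > 0 for all t. For a start time u ≥ 0 and distance d ≥ 0, define τ(u, d) = inf{t ≥ 0 : ∫_u^{u+t} v(s) ds ≥ d}. Then for any d ≥ 0, if u₁ ≤ u₂, we have u₁ + τ(u₁, d) ≤ u₂ + τ(u₂, d) (the FIFO / consistency property: the arrival time is a monotone function of the departure time). -/
/-!
The travel time `τ(u, d)` is the least element of the closed set of durations `t ≥ 0` after
which the distance covered from `u` reaches `d`; the lower bound `v ≥ vmin` makes this set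
nonempty (it contains `d / vmin`). If `u₁ ≤ u₂`, a vehicle leaving at `u₁` has covered a
nonnegative distance by time `u₂`, so waiting until `u₂ + τ(u₂, d)` is a feasible duration for it.
-/

open MeasureTheory intervalIntegral

def reachTimes (v : ℝ → ℝ) (u d : ℝ) : Set ℝ :=
  {t : ℝ | 0 ≤ t ∧ d ≤ ∫ s in u..(u + t), v s}

section reachTimes

variable {v : ℝ → ℝ}

lemma bddBelow_reachTimes (u d : ℝ) : BddBelow (reachTimes v u d) :=
  ⟨0, fun _ ht => ht.1⟩

lemma isClosed_reachTimes (hint : ∀ a b : ℝ, IntervalIntegrable v volume a b) (u d : ℝ) :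
    IsClosed (reachTimes v u d) := by
  have hcont : Continuous fun t => ∫ s in u..(u + t), v s :=
    (continuous_primitive hint u).comp (continuous_const.add continuous_id)
  exact (isClosed_le continuous_const continuous_id).inter (isClosed_le continuous_const hcont)

lemma div_mem_reachTimes {vmin : ℝ} (hvmin : 0 < vmin)
    (hint : ∀ a b : ℝ, IntervalIntegrable v volume a b)
    {u d : ℝ} (hlb : ∀ t ∈ Set.Ici u, vmin ≤ v t) (hd : 0 ≤ d) :
    d / vmin ∈ reachTimes v u d := by
  have hdiv : 0 ≤ d / vmin := div_nonneg hd hvmin.le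
  refine ⟨hdiv, ?_⟩
  calc d = ∫ _ in u..(u + d / vmin), vmin := by
          rw [intervalIntegral.integral_const, smul_eq_mul, add_sub_cancel_left,
            div_mul_cancel₀ d hvmin.ne']
    _ ≤ ∫ s in u..(u + d / vmin), v s :=
          integral_mono_on (le_add_of_nonneg_right hdiv) intervalIntegrable_const (hint _ _)
            fun x hx => hlb x hx.1

lemma csInf_mem_reachTimes (hint : ∀ a b : ℝ, IntervalIntegrable v volume a b)
    {u d : ℝ} (hne : (reachTimes v u d).Nonempty) :
    sInf (reachTimes v u d) ∈ reachTimes v u d :=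
  (isClosed_reachTimes hint u d).csInf_mem hne (bddBelow_reachTimes u d)

lemma sub_add_mem_reachTimes (hint : ∀ a b : ℝ, IntervalIntegrable v volume a b)
    {u₁ u₂ d t : ℝ} (h12 : u₁ ≤ u₂) (hv : ∀ x ∈ Set.Icc u₁ u₂, 0 ≤ v x)
    (ht : t ∈ reachTimes v u₂ d) :
    u₂ - u₁ + t ∈ reachTimes v u₁ d := by
  obtain ⟨ht0, htd⟩ := ht
  refine ⟨by linarith, ?_⟩
  have hwait : 0 ≤ ∫ s in u₁..u₂, v s := integral_nonneg h12 hv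
  calc d ≤ (∫ s in u₁..u₂, v s) + ∫ s in u₂..(u₂ + t), v s := by linarith
    _ = ∫ s in u₁..(u₁ + (u₂ - u₁ + t)), v s := by
          rw [integral_add_adjacent_intervals (hint _ _) (hint _ _)]
          ring_nf

end reachTimes

theorem stmt0_general (v : ℝ → ℝ) (vmin : ℝ) (hvmin : 0 < vmin)
    (hlb : ∀ t, 0 ≤ t → vmin ≤ v t)
    (hint : ∀ a b : ℝ, IntervalIntegrable v MeasureTheory.volume a b)
    (τ : ℝ → ℝ → ℝ)
    (hτ : ∀ u d, τ u d = sInf {t : ℝ | 0 ≤ t ∧ d ≤ ∫ s in u..(u + t), v s})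
    (d : ℝ) (hd : 0 ≤ d) (u₁ u₂ : ℝ) (hu₁ : 0 ≤ u₁) (h12 : u₁ ≤ u₂) :
    u₁ + τ u₁ d ≤ u₂ + τ u₂ d := by
  have hτ₂ : τ u₂ d ∈ reachTimes v u₂ d := by
    rw [hτ]
    exact csInf_mem_reachTimes hint
      ⟨_, div_mem_reachTimes hvmin hint (fun t ht => hlb t (hu₁.trans (h12.trans ht))) hd⟩
  have hfeasible : u₂ - u₁ + τ u₂ d ∈ reachTimes v u₁ d :=
    sub_add_mem_reachTimes hint h12
      (fun x hx => hvmin.le.trans (hlb x (hu₁.trans hx.1))) hτ₂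
  have hτ₁ : τ u₁ d ≤ u₂ - u₁ + τ u₂ d := by
    rw [hτ]
    exact csInf_le (bddBelow_reachTimes u₁ d) hfeasible
  linarith

/-- FIFO property: the arrival time `u + τ(u,d)` is monotone in the departure time `u`. -/
theorem stmt0 (v : ℝ → ℝ) (vmin : ℝ) (hvmin : 0 < vmin)
    (hmeas : Measurable v)
    (hlb : ∀ t, 0 ≤ t → vmin ≤ v t)
    (hint : ∀ a b : ℝ, IntervalIntegrable v MeasureTheory.volume a b)
    (τ : ℝ → ℝ → ℝ)
    (hτ : ∀ u d, τ u d = sInf {t : ℝ | 0 ≤ t ∧ d ≤ ∫ s in u..(u + t), v s})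
    (d : ℝ) (hd : 0 ≤ d) (u₁ u₂ : ℝ) (hu₁ : 0 ≤ u₁) (h12 : u₁ ≤ u₂) :
    u₁ + τ u₁ d ≤ u₂ + τ u₂ d :=
  stmt0_general v vmin hvmin hlb hint τ hτ d hd u₁ u₂ hu₁ h12
end

section
/- Let Q be an n × n generator matrix that is block-decomposable with respect to a partition of the index set as a product 𝓘 = 𝓘₁ × 𝓘₂, in the sense that Q = Q₂ ⊕ Q₁ (Kronecker sum) for generators Q₁ on 𝓘₁ and Q₂ on 𝓘₂. Let V be a diagonal matrix on 𝓘 whose diagonal entries depend only on the 𝓘₁-coordinate: V = I_{𝓘₂} ⊗ V₁ for a positive diagonal matrix V₁ on 𝓘₁. Then for every d ≥ 0, the marginal over the 𝓘₁-coordinate of the stochastic matrix exp(d V⁻¹ Q) depends only on Q₁ and V₁; specifically, Σ_{s₂'} [exp(d V⁻¹ Q)]_{(s₂,s₁),(s₂',s₁')} = [exp(d V₁⁻¹ Q₁)]_{s₁,s₁'} for all s₂ ∈ 𝓘₂ and s₁, s₁' ∈ 𝓘₁. -/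
open Matrix
open scoped Kronecker

/-!
Let `L` be the `0/1` lumping matrix from `𝓘₂ × 𝓘₁` to `𝓘₁`, `L_{(s₂,s₁),s₁'} = [s₁ = s₁']`, so
that `(X L)_{a,s₁'} = Σ_{s₂'} X_{a,(s₂',s₁')}` is the `𝓘₁`-marginal of `X`. Since the rows of `Q₂`
sum to zero, `(Q₂ ⊗ I) L = 0` and `(I ⊗ Q₁) L = L Q₁`, while `V⁻¹ = I ⊗ V₁⁻¹` satisfies
`V⁻¹ L = L V₁⁻¹`. Hence `L` intertwines `d V⁻¹ Q` with `d V₁⁻¹ Q₁`, the intertwining passes to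
every power and so to the exponential series, and `exp(d V⁻¹ Q) L = L exp(d V₁⁻¹ Q₁)` is the
claim read entrywise.
-/

namespace Matrix

open NormedSpace in
theorem exp_mul_eq_mul_exp_of_mul_eq {𝕂 m n : Type*} [RCLike 𝕂] [Fintype m] [DecidableEq m]
    [Fintype n] [DecidableEq n] {A : Matrix m m 𝕂} {B : Matrix n n 𝕂} {U : Matrix m n 𝕂}
    (h : A * U = U * B) : exp A * U = U * exp B := by
  have hpow (k : ℕ) : A ^ k * U = U * B ^ k := by
    induction k with
    | zero => simp
    | succ k ih => rw [pow_succ, pow_succ, Matrix.mul_assoc, h, ← Matrix.mul_assoc, ih,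
        Matrix.mul_assoc]
  -- any norm gives summability of the exponential series; take the operator norm
  open scoped Norms.Operator in
  have hA := (expSeries_summable' (𝕂 := 𝕂) A).hasSum.map (mulRightLinearMap m 𝕂 U)
    (continuous_id.matrix_mul continuous_const)
  have hB := (expSeries_summable' (𝕂 := 𝕂) B).hasSum.map (mulLeftLinearMap n 𝕂 U)
    (continuous_const.matrix_mul continuous_id)
  rw [exp_eq_tsum 𝕂, exp_eq_tsum 𝕂]
  exact hA.unique (hB.congr_fun fun k => by simp [hpow])

theorem diagonal_comp_snd {ι κ R : Type*} [DecidableEq ι] [DecidableEq κ] [MulZeroOneClass R]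
    (v : κ → R) : diagonal (fun p : ι × κ => v p.2) = (1 : Matrix ι ι R) ⊗ₖ diagonal v := by
  rw [← diagonal_one, diagonal_kronecker_diagonal]
  simp

section Lumping

variable {l n ι κ R : Type*} [DecidableEq κ] [CommSemiring R]

def lumpingMatrix (ι κ R : Type*) [DecidableEq κ] [Zero R] [One R] : Matrix (ι × κ) κ R :=
  (1 : Matrix κ κ R).submatrix Prod.snd id

theorem mul_lumpingMatrix_apply [Fintype ι] [Fintype κ] (X : Matrix l (ι × κ) R) (a : l)
    (k : κ) : (X * lumpingMatrix ι κ R) a k = ∑ i, X a (i, k) := by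
  simp [lumpingMatrix, mul_apply, Fintype.sum_prod_type, one_apply]

theorem lumpingMatrix_mul [Fintype κ] (Y : Matrix κ n R) :
    lumpingMatrix ι κ R * Y = Y.submatrix Prod.snd id :=
  one_submatrix_mul Prod.snd (Equiv.refl κ) Y

theorem kronecker_one_mul_lumpingMatrix [Fintype ι] [Fintype κ] {Q : Matrix ι ι R}
    (hQ : ∀ i, ∑ j, Q i j = 0) : (Q ⊗ₖ (1 : Matrix κ κ R)) * lumpingMatrix ι κ R = 0 := by
  ext ⟨i, k⟩ k'
  simp [mul_lumpingMatrix_apply, one_apply, hQ]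

theorem one_kronecker_mul_lumpingMatrix [Fintype ι] [DecidableEq ι] [Fintype κ]
    (M : Matrix κ κ R) :
    ((1 : Matrix ι ι R) ⊗ₖ M) * lumpingMatrix ι κ R = lumpingMatrix ι κ R * M := by
  ext ⟨i, k⟩ k'
  simp [mul_lumpingMatrix_apply, lumpingMatrix_mul, one_apply]

end Lumping

end Matrix

theorem stmt17_general {I₁ I₂ : Type*} [Fintype I₁] [DecidableEq I₁] [Fintype I₂] [DecidableEq I₂]
    (Q₁ : Matrix I₁ I₁ ℝ) (Q₂ : Matrix I₂ I₂ ℝ)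
    (h2row : ∀ i, ∑ j, Q₂ i j = 0)
    (v₁ : I₁ → ℝ)
    (d : ℝ) (s₂ : I₂) (s₁ s₁' : I₁) :
    ∑ s₂' : I₂,
        NormedSpace.exp (d • ((Matrix.diagonal fun p : I₂ × I₁ => v₁ p.2)⁻¹ *
            (Q₂ ⊗ₖ (1 : Matrix I₁ I₁ ℝ) + (1 : Matrix I₂ I₂ ℝ) ⊗ₖ Q₁))) (s₂, s₁) (s₂', s₁')
      = NormedSpace.exp (d • ((Matrix.diagonal v₁)⁻¹ * Q₁)) s₁ s₁' := by
  set V := diagonal fun p : I₂ × I₁ => v₁ p.2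
  set Q := Q₂ ⊗ₖ (1 : Matrix I₁ I₁ ℝ) + (1 : Matrix I₂ I₂ ℝ) ⊗ₖ Q₁
  set L := lumpingMatrix I₂ I₁ ℝ
  have hV : V⁻¹ * L = L * (diagonal v₁)⁻¹ := by
    rw [show V = 1 ⊗ₖ diagonal v₁ from diagonal_comp_snd v₁, inv_kronecker, inv_one,
      one_kronecker_mul_lumpingMatrix]
  have hQ : Q * L = L * Q₁ := by
    rw [Matrix.add_mul, kronecker_one_mul_lumpingMatrix h2row, zero_add,
      one_kronecker_mul_lumpingMatrix]
  have hL : (d • (V⁻¹ * Q)) * L = L * (d • ((diagonal v₁)⁻¹ * Q₁)) := by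
    rw [Matrix.smul_mul, Matrix.mul_smul, Matrix.mul_assoc, hQ, ← Matrix.mul_assoc, hV,
      Matrix.mul_assoc]
  have hentry := congrFun₂ (exp_mul_eq_mul_exp_of_mul_eq hL) (s₂, s₁) s₁'
  rwa [mul_lumpingMatrix_apply, lumpingMatrix_mul, submatrix_apply] at hentry

/-- Local-correlation reduction: if the generator decomposes as the Kronecker sum
`Q = Q₂ ⊕ Q₁` on `𝓘₂ × 𝓘₁` and the speeds depend only on the `𝓘₁`-coordinate
(`V = I ⊗ V₁`), then the `𝓘₁`-marginal of the stochastic matrix `exp(d V⁻¹ Q)` is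
`exp(d V₁⁻¹ Q₁)`:
`Σ_{s₂'} [exp(d V⁻¹ Q)]_{(s₂,s₁),(s₂',s₁')} = [exp(d V₁⁻¹ Q₁)]_{s₁,s₁'}`. -/
theorem stmt17 {I₁ I₂ : Type*} [Fintype I₁] [DecidableEq I₁] [Fintype I₂] [DecidableEq I₂]
    (Q₁ : Matrix I₁ I₁ ℝ) (Q₂ : Matrix I₂ I₂ ℝ)
    (h1off : ∀ i j, i ≠ j → 0 ≤ Q₁ i j) (h1row : ∀ i, ∑ j, Q₁ i j = 0)
    (h2off : ∀ i j, i ≠ j → 0 ≤ Q₂ i j) (h2row : ∀ i, ∑ j, Q₂ i j = 0)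
    (v₁ : I₁ → ℝ) (hv₁ : ∀ i, 0 < v₁ i)
    (d : ℝ) (hd : 0 ≤ d) (s₂ : I₂) (s₁ s₁' : I₁) :
    ∑ s₂' : I₂,
        NormedSpace.exp (d • ((Matrix.diagonal fun p : I₂ × I₁ => v₁ p.2)⁻¹ *
            (Q₂ ⊗ₖ (1 : Matrix I₁ I₁ ℝ) + (1 : Matrix I₂ I₂ ℝ) ⊗ₖ Q₁))) (s₂, s₁) (s₂', s₁')
      = NormedSpace.exp (d • ((Matrix.diagonal v₁)⁻¹ * Q₁)) s₁ s₁' :=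
  stmt17_general Q₁ Q₂ h2row v₁ d s₂ s₁ s₁'
end

section
/- Let v : [0,∞) → ℝ be measurable with 0 < v_min ≤ v(t) ≤ v_max, and define the arrival-time function a(u) = u + τ(u, d) where τ(u, d) = inf{t ≥ 0 : ∫_u^{u+t} v(s) ds ≥ d} for a fixed distance d > 0. Then a is Lipschitz continuous with Lipschitz constant at most max(1, v_max / v_min): |a(u₁) − a(u₂)| ≤ (v_max / v_min) |u₁ − u₂| for all u₁, u₂ ≥ 0. -/
/-!
Since `vmin ≤ v`, the hitting time `τ(u, d)` is finite and, by continuity of the primitive, is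
attained. Departing later at `u' ≥ u` cannot arrive earlier (FIFO), because the distance covered
on `[u, u']` is nonnegative. Conversely, on `[u, u']` one covers at most `vmax (u' - u)`, and
after the earlier arrival time `a(u)` this missing distance is made up within
`vmax (u' - u) / vmin` time units, so `a(u') ≤ a(u) + (vmax / vmin) (u' - u)`.
-/

open MeasureTheory intervalIntegral Set

noncomputable section

def hittingTime (v : ℝ → ℝ) (u d : ℝ) : ℝ :=
  sInf {t : ℝ | 0 ≤ t ∧ d ≤ ∫ s in u..(u + t), v s}

def arrivalTime (v : ℝ → ℝ) (d u : ℝ) : ℝ :=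
  u + hittingTime v u d

end

section IntegralBounds

variable {v : ℝ → ℝ} {c x y : ℝ}

lemma mul_sub_le_integral_of_le_on (hv : IntervalIntegrable v volume x y) (hxy : x ≤ y)
    (hc : ∀ t ∈ Icc x y, c ≤ v t) : c * (y - x) ≤ ∫ s in x..y, v s := by
  simpa [mul_comm] using integral_mono_on hxy intervalIntegrable_const hv hc

lemma integral_le_mul_sub_of_le_on (hv : IntervalIntegrable v volume x y) (hxy : x ≤ y)
    (hc : ∀ t ∈ Icc x y, v t ≤ c) : ∫ s in x..y, v s ≤ c * (y - x) := by
  simpa [mul_comm] using integral_mono_on hxy hv intervalIntegrable_const hc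

end IntegralBounds

namespace hittingTime

variable {v : ℝ → ℝ} {u d t : ℝ}

lemma le_of_le_integral (ht : 0 ≤ t) (hd : d ≤ ∫ s in u..(u + t), v s) :
    hittingTime v u d ≤ t :=
  csInf_le ⟨0, fun _ hs => hs.1⟩ ⟨ht, hd⟩

variable {vmin : ℝ} (hvmin : 0 < vmin) (hlb : ∀ t, u ≤ t → vmin ≤ v t)
  (hint : ∀ a b : ℝ, IntervalIntegrable v volume a b)
include hvmin hlb hint

lemma nonneg_and_le_integral :
    0 ≤ hittingTime v u d ∧ d ≤ ∫ s in u..(u + hittingTime v u d), v s := by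
  have hcont : Continuous fun t => ∫ s in u..(u + t), v s :=
    (continuous_primitive hint u).comp (continuous_const.add continuous_id)
  have hclosed : IsClosed {t : ℝ | 0 ≤ t ∧ d ≤ ∫ s in u..(u + t), v s} :=
    (isClosed_le continuous_const continuous_id).inter (isClosed_le continuous_const hcont)
  -- at speed at least `vmin`, the distance `|d|` is covered within `|d| / vmin`
  have hreach : d ≤ ∫ s in u..(u + |d| / vmin), v s := by
    have hlen : 0 ≤ |d| / vmin := by positivity
    have := mul_sub_le_integral_of_le_on (hint _ _) (le_add_of_nonneg_right hlen)
      fun t ht => hlb t ht.1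
    rw [add_sub_cancel_left, mul_div_cancel₀ _ hvmin.ne'] at this
    exact (le_abs_self d).trans this
  exact hclosed.csInf_mem ⟨_, by positivity, hreach⟩ ⟨0, fun _ hs => hs.1⟩

lemma nonneg : 0 ≤ hittingTime v u d :=
  (nonneg_and_le_integral hvmin hlb hint).1

lemma le_integral : d ≤ ∫ s in u..(u + hittingTime v u d), v s :=
  (nonneg_and_le_integral hvmin hlb hint).2

end hittingTime

namespace arrivalTime

variable {v : ℝ → ℝ} {vmin vmax d u u' : ℝ} (hvmin : 0 < vmin)
  (hlb : ∀ t, u ≤ t → vmin ≤ v t) (hint : ∀ a b : ℝ, IntervalIntegrable v volume a b)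
  (huu' : u ≤ u')
include hvmin hlb hint huu'

lemma mono : arrivalTime v d u ≤ arrivalTime v d u' := by
  have hlb' : ∀ t, u' ≤ t → vmin ≤ v t := fun t ht => hlb t (huu'.trans ht)
  have hτ' := hittingTime.nonneg (d := d) hvmin hlb' hint
  have hgap : 0 ≤ ∫ s in u..u', v s :=
    (mul_nonneg hvmin.le (sub_nonneg.2 huu')).trans
      (mul_sub_le_integral_of_le_on (hint _ _) huu' fun t ht => hlb t ht.1)
  have hreach : d ≤ ∫ s in u..(u + (u' - u + hittingTime v u' d)), v s := by
    rw [← add_assoc, add_sub_cancel, ← integral_add_adjacent_intervals (hint u u') (hint _ _)]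
    linarith [hittingTime.le_integral (d := d) hvmin hlb' hint]
  have := hittingTime.le_of_le_integral (by linarith) hreach
  unfold arrivalTime
  linarith

lemma le_add_mul_sub (hub : ∀ t, u ≤ t → v t ≤ vmax) :
    arrivalTime v d u' ≤ arrivalTime v d u + vmax / vmin * (u' - u) := by
  set A := arrivalTime v d u
  set δ := vmax / vmin * (u' - u)
  have hvm : vmin ≤ vmax := (hlb u le_rfl).trans (hub u le_rfl)
  have hδ : u' - u ≤ δ :=
    le_mul_of_one_le_left (sub_nonneg.2 huu') ((one_le_div hvmin).2 hvm)
  have hτ := hittingTime.nonneg (d := d) hvmin hlb hint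
  have huA : u ≤ A := le_add_of_nonneg_right hτ
  have hmissing : ∫ s in u..u', v s ≤ vmax * (u' - u) :=
    integral_le_mul_sub_of_le_on (hint _ _) huu' fun t ht => hub t ht.1
  have hcatchup : vmax * (u' - u) ≤ ∫ s in A..(A + δ), v s := by
    have := mul_sub_le_integral_of_le_on (hint A (A + δ)) (by linarith)
      fun t ht => hlb t (huA.trans ht.1)
    rwa [add_sub_cancel_left, ← mul_assoc, mul_div_cancel₀ _ hvmin.ne'] at this
  have hreach : d ≤ ∫ s in u'..(u' + (A + δ - u')), v s := by
    rw [add_sub_cancel, ← integral_add_adjacent_intervals (hint u' A) (hint _ _)]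
    have hA : d ≤ ∫ s in u..A, v s := hittingTime.le_integral hvmin hlb hint
    linarith [integral_add_adjacent_intervals (hint u u') (hint u' A)]
  have := hittingTime.le_of_le_integral (by linarith) hreach
  unfold arrivalTime
  linarith

end arrivalTime

lemma abs_arrivalTime_sub_le {v : ℝ → ℝ} {vmin vmax d : ℝ} (hvmin : 0 < vmin)
    (hlb : ∀ t, 0 ≤ t → vmin ≤ v t) (hub : ∀ t, 0 ≤ t → v t ≤ vmax)
    (hint : ∀ a b : ℝ, IntervalIntegrable v volume a b) {u₁ u₂ : ℝ}
    (hu₁ : 0 ≤ u₁) (hu₂ : 0 ≤ u₂) :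
    |arrivalTime v d u₁ - arrivalTime v d u₂| ≤ vmax / vmin * |u₁ - u₂| := by
  wlog h : u₁ ≤ u₂ generalizing u₁ u₂
  · rw [abs_sub_comm, abs_sub_comm u₁]
    exact this hu₂ hu₁ (le_of_not_ge h)
  have hlb' : ∀ t, u₁ ≤ t → vmin ≤ v t := fun t ht => hlb t (hu₁.trans ht)
  have hub' : ∀ t, u₁ ≤ t → v t ≤ vmax := fun t ht => hub t (hu₁.trans ht)
  rw [abs_sub_comm, abs_of_nonneg (sub_nonneg.2 (arrivalTime.mono hvmin hlb' hint h)),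
    abs_sub_comm, abs_of_nonneg (sub_nonneg.2 h)]
  linarith [arrivalTime.le_add_mul_sub hvmin hlb' hint h hub' (d := d)]

theorem stmt18_general (v : ℝ → ℝ) (vmin vmax : ℝ) (hvmin : 0 < vmin)
    (hlb : ∀ t, 0 ≤ t → vmin ≤ v t) (hub : ∀ t, 0 ≤ t → v t ≤ vmax)
    (hint : ∀ a b : ℝ, IntervalIntegrable v MeasureTheory.volume a b)
    (τ : ℝ → ℝ → ℝ)
    (hτ : ∀ u d, τ u d = sInf {t : ℝ | 0 ≤ t ∧ d ≤ ∫ s in u..(u + t), v s})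
    (d : ℝ)
    (a : ℝ → ℝ) (ha : ∀ u, a u = u + τ u d)
    (u₁ u₂ : ℝ) (hu₁ : 0 ≤ u₁) (hu₂ : 0 ≤ u₂) :
    |a u₁ - a u₂| ≤ (vmax / vmin) * |u₁ - u₂| := by
  have ha' : a = arrivalTime v d := funext fun u => by rw [ha, hτ]; rfl
  exact ha' ▸ abs_arrivalTime_sub_le hvmin hlb hub hint hu₁ hu₂

/-- Lipschitz continuity of the arrival time `a(u) = u + τ(u,d)` in the departure time:
`|a(u₁) − a(u₂)| ≤ (vmax/vmin) |u₁ − u₂|`. -/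
theorem stmt18 (v : ℝ → ℝ) (vmin vmax : ℝ) (hvmin : 0 < vmin)
    (hmeas : Measurable v)
    (hlb : ∀ t, 0 ≤ t → vmin ≤ v t) (hub : ∀ t, 0 ≤ t → v t ≤ vmax)
    (hint : ∀ a b : ℝ, IntervalIntegrable v MeasureTheory.volume a b)
    (τ : ℝ → ℝ → ℝ)
    (hτ : ∀ u d, τ u d = sInf {t : ℝ | 0 ≤ t ∧ d ≤ ∫ s in u..(u + t), v s})
    (d : ℝ) (hd : 0 < d)
    (a : ℝ → ℝ) (ha : ∀ u, a u = u + τ u d)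
    (u₁ u₂ : ℝ) (hu₁ : 0 ≤ u₁) (hu₂ : 0 ≤ u₂) :
    |a u₁ - a u₂| ≤ (vmax / vmin) * |u₁ - u₂| :=
  stmt18_general v vmin vmax hvmin hlb hub hint τ hτ d a ha u₁ u₂ hu₁ hu₂
end
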